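/- Let ℋ be a finite-dimensional complex Hilbert space, H ∈ B(ℋ) self-adjoint, and suppose σ_*(H) = I ∩ σ(H) for some interval I ⊆ ℝ, with gap g := dist(σ_*(H), σ(H)∖σ_*(H)) > 0, and let P_* be the spectral projection of H associated with σ_*(H). Let W : ℝ → ℂ be Lebesgue integrable with Ŵ(ω) = −i/(√(2π)·ω) for all ω ∈ ℝ with |ω| ≥ g, and define ℐ_H(A) := ∫_ℝ W(s)·e^{iHs}·A·e^{−iHs} ds. Then for every A ∈ B(ℋ) with P_*AP_* = 0 and (1−P_*)A(1−P_*) = 0, one has −i[H, ℐ_H(A)] = A and ℐ_H(−i[H,A]) = A. (Lemma D.1, first part: ℐ_H inverts the Liouvillian on off-diagonal operators.) -/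

import Mathlib

/-!
In an orthonormal eigenbasis `(vᵢ)` of `H` with eigenvalues `μᵢ`, conjugation by `e^{iHs}`
multiplies the matrix entry `⟪vᵢ, A vⱼ⟫` by `e^{i(μᵢ-μⱼ)s}`. Hence `ℐ_H` multiplies it by
`∫ W(s) e^{i(μᵢ-μⱼ)s} ds = √(2π) Ŵ(μⱼ-μᵢ)`, while `A ↦ -i[H,A]` multiplies it by `-i(μᵢ-μⱼ)`.
Off-diagonality kills the entries with `μᵢ`, `μⱼ` both inside or both outside `σ_*`; for all
other entries `|μᵢ-μⱼ| ≥ g`, where `√(2π) Ŵ(μⱼ-μᵢ) = i/(μᵢ-μⱼ)` and the two multipliers are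
inverse to each other.
-/

open scoped BigOperators ComplexConjugate

noncomputable section

variable {ℋ : Type*} [NormedAddCommGroup ℋ] [InnerProductSpace ℂ ℋ] [FiniteDimensional ℂ ℋ]

/-- The orthogonal projection onto a subspace `K`, as an operator on `ℋ`. -/
noncomputable def orthProj (K : Submodule ℂ ℋ) : ℋ →L[ℂ] ℋ :=
  K.subtypeL.comp K.orthogonalProjectionOnto

/-- The spectral projection of `H` associated with a set `S ⊆ ℝ`: the orthogonal projection
onto the span of all eigenvectors of `H` with eigenvalue in `S`. -/
noncomputable def spectralProj (H : ℋ →L[ℂ] ℋ) (S : Set ℝ) : ℋ →L[ℂ] ℋ :=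
  orthProj (⨆ μ ∈ S, Module.End.eigenspace (H : ℋ →ₗ[ℂ] ℋ) (μ : ℂ))

/-- An operator `A` is off-diagonal with respect to a projection `P` if `PAP = 0` and
`(1−P)A(1−P) = 0`. -/
def IsOffDiagonal (P A : ℋ →L[ℂ] ℋ) : Prop :=
  P * A * P = 0 ∧ (1 - P) * A * (1 - P) = 0

/-- The set of (real) eigenvalues of `H`. -/
def realEigenvalues (H : ℋ →L[ℂ] ℋ) : Set ℝ :=
  {μ : ℝ | Module.End.HasEigenvalue (H : ℋ →ₗ[ℂ] ℋ) (μ : ℂ)}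

/-- The Fourier transform `Ŵ(ω) = (2π)^{-1/2} ∫ W(s) e^{−iωs} ds`. -/
noncomputable def fhat (W : ℝ → ℂ) (ω : ℝ) : ℂ :=
  (Real.sqrt (2 * Real.pi) : ℂ)⁻¹ * ∫ s : ℝ, Complex.exp (-(Complex.I * ω * s)) * W s

/-- The map `ℐ_H(A) = ∫ W(s) e^{iHs} A e^{−iHs} ds`. -/
noncomputable def invLiouville (W : ℝ → ℂ) (H A : ℋ →L[ℂ] ℋ) : ℋ →L[ℂ] ℋ :=
  ∫ s : ℝ, W s • (NormedSpace.exp ((s : ℂ) • (Complex.I • H)) * A *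
    NormedSpace.exp ((-s : ℂ) • (Complex.I • H)))

open MeasureTheory Complex Module.End
open scoped InnerProductSpace

theorem exp_apply_of_apply_eq_smul {E : Type*} [NormedAddCommGroup E] [NormedSpace ℂ E]
    [CompleteSpace E] {T : E →L[ℂ] E} {v : E} {c : ℂ} (hv : T v = c • v) :
    NormedSpace.exp T v = exp c • v := by
  have hpow : ∀ n : ℕ, (T ^ n) v = c ^ n • v := by
    intro n
    induction n with
    | zero => simp
    | succ n ih => rw [pow_succ', mul_apply_eq_comp, ih, map_smul, hv, smul_smul, pow_succ]
  have hT :=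
    (NormedSpace.exp_series_hasSum_exp' (𝕂 := ℂ) T).mapL (ContinuousLinearMap.apply ℂ E v)
  have hc := (NormedSpace.exp_series_hasSum_exp' (𝕂 := ℂ) c).smul_const v
  rw [← exp_eq_exp_ℂ] at hc
  refine hT.unique ?_
  simpa [hpow, smul_smul] using hc

theorem ContinuousLinearMap.ext_inner_orthonormalBasis {𝕜 E ι : Type*} [RCLike 𝕜]
    [NormedAddCommGroup E] [InnerProductSpace 𝕜 E] [Fintype ι] (B : OrthonormalBasis ι 𝕜 E)
    {T S : E →L[𝕜] E} (h : ∀ i j, ⟪B i, T (B j)⟫_𝕜 = ⟪B i, S (B j)⟫_𝕜) : T = S :=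
  coe_injective <| B.toBasis.ext fun j =>
    InnerProductSpace.ext_inner_left_basis B.toBasis fun i => by simpa using h i j

section

variable {𝕜 E : Type*} [RCLike 𝕜] [NormedAddCommGroup E] [InnerProductSpace 𝕜 E]

theorem inner_apply_eq_zero_of_mul_mul_eq_zero [CompleteSpace E] {P A : E →L[𝕜] E}
    (hP : IsSelfAdjoint P) (hPAP : P * A * P = 0) {v w : E} (hv : P v = v) (hw : P w = w) :
    ⟪v, A w⟫_𝕜 = 0 :=
  calc ⟪v, A w⟫_𝕜 = ⟪P v, A (P w)⟫_𝕜 := by rw [hv, hw]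
    _ = ⟪v, (P * A * P) w⟫_𝕜 := hP.isSymmetric v (A (P w))
    _ = 0 := by rw [hPAP, zero_apply, inner_zero_right]

theorem LinearMap.IsSymmetric.eigenspace_isOrtho_iSup_eigenspace {T : E →ₗ[𝕜] E}
    (hT : T.IsSymmetric) {S : Set ℝ} {a : ℝ} (ha : a ∉ S) :
    eigenspace T (a : 𝕜) ⟂ ⨆ μ ∈ S, eigenspace T (μ : 𝕜) := by
  simp only [Submodule.isOrtho_iSup_right]
  intro μ hμ
  exact hT.orthogonalFamily_eigenspaces.isOrtho fun h => ha (RCLike.ofReal_inj.mp h ▸ hμ)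

end

section

variable {K : Submodule ℂ ℋ} {A : ℋ →L[ℂ] ℋ} {v w : ℋ}

theorem IsOffDiagonal.inner_eq_zero_of_mem (hA : IsOffDiagonal (orthProj K) A) (hv : v ∈ K)
    (hw : w ∈ K) : ⟪v, A w⟫_ℂ = 0 :=
  inner_apply_eq_zero_of_mul_mul_eq_zero (isSelfAdjoint_starProjection K) hA.1
    (K.starProjection_eq_self_iff.mpr hv) (K.starProjection_eq_self_iff.mpr hw)

theorem IsOffDiagonal.inner_eq_zero_of_mem_orthogonal (hA : IsOffDiagonal (orthProj K) A)
    (hv : v ∈ Kᗮ) (hw : w ∈ Kᗮ) : ⟪v, A w⟫_ℂ = 0 := by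
  refine inner_apply_eq_zero_of_mul_mul_eq_zero (isSelfAdjoint_starProjection Kᗮ) ?_
    (Kᗮ.starProjection_eq_self_iff.mpr hv) (Kᗮ.starProjection_eq_self_iff.mpr hw)
  rw [K.starProjection_orthogonal']
  exact hA.2

end

-- The `NormedSpace.exp` API needs a `ℚ`-normed-algebra structure, which is not inferred here.
noncomputable instance : NormedAlgebra ℚ (ℋ →L[ℂ] ℋ) := NormedAlgebra.restrictScalars ℚ ℂ _

def evolution (H : ℋ →L[ℂ] ℋ) (s : ℝ) : ℋ →L[ℂ] ℋ :=
  NormedSpace.exp ((s : ℂ) • (I • H))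

def invLiouvilleSymbol (W : ℝ → ℂ) (ω : ℝ) : ℂ :=
  ∫ s : ℝ, W s * exp (I * ω * s)

theorem invLiouville_eq_integral_evolution (W : ℝ → ℂ) (H A : ℋ →L[ℂ] ℋ) :
    invLiouville W H A = ∫ s : ℝ, W s • (evolution H s * A * evolution H (-s)) := by
  simp only [invLiouville, evolution, ofReal_neg]

section

variable {H : ℋ →L[ℂ] ℋ}

theorem evolution_mem_unitary (hH : IsSelfAdjoint H) (s : ℝ) : evolution H s ∈ unitary _ :=
  NormedSpace.exp_mem_unitary_of_mem_skewAdjoint <| by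
    rw [skewAdjoint.mem_iff, star_smul, star_smul, hH.star_eq]
    simp

theorem star_evolution (hH : IsSelfAdjoint H) (s : ℝ) :
    star (evolution H s) = evolution H (-s) := by
  rw [evolution, evolution, NormedSpace.star_exp, star_smul, star_smul, hH.star_eq]
  simp

theorem evolution_apply_of_apply_eq_smul (s : ℝ) {v : ℋ} {a : ℂ} (hv : H v = a • v) :
    evolution H s v = exp (I * a * s) • v := by
  refine exp_apply_of_apply_eq_smul ?_
  rw [smul_apply, smul_apply, hv, smul_smul, smul_smul]
  ring_nf

theorem inner_evolution_right_of_apply_eq_smul (hH : IsSelfAdjoint H) (s : ℝ) {v : ℋ} {a : ℝ}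
    (hv : H v = (a : ℂ) • v) (x : ℋ) : ⟪v, evolution H s x⟫_ℂ = exp (I * a * s) * ⟪v, x⟫_ℂ := by
  rw [← ContinuousLinearMap.adjoint_inner_left, ← ContinuousLinearMap.star_eq_adjoint,
    star_evolution hH, evolution_apply_of_apply_eq_smul _ hv, inner_smul_left, ← exp_conj]
  simp

theorem integrable_smul_evolution_conj (hH : IsSelfAdjoint H) {W : ℝ → ℂ} (hW : Integrable W)
    (A : ℋ →L[ℂ] ℋ) :
    Integrable fun s : ℝ => W s • (evolution H s * A * evolution H (-s)) := by
  have hcont : Continuous fun s : ℝ => evolution H s :=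
    NormedSpace.exp_continuous.comp (by fun_prop)
  refine (hW.norm.mul_const ‖A‖).mono' (hW.aestronglyMeasurable.smul
    ((hcont.mul continuous_const).mul (hcont.comp continuous_neg)).aestronglyMeasurable)
    (Filter.Eventually.of_forall fun s => ?_)
  rw [norm_smul, CStarRing.norm_mul_mem_unitary _ (evolution_mem_unitary hH _),
    CStarRing.norm_mem_unitary_mul _ (evolution_mem_unitary hH _)]

theorem inner_commutator_of_apply_eq_smul (hH : IsSelfAdjoint H)
    (A : ℋ →L[ℂ] ℋ) {v w : ℋ} {a b : ℝ} (hv : H v = (a : ℂ) • v) (hw : H w = (b : ℂ) • w) :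
    ⟪v, (H * A - A * H) w⟫_ℂ = ((a - b : ℝ) : ℂ) * ⟪v, A w⟫_ℂ := by
  rw [sub_apply, mul_apply_eq_comp, mul_apply_eq_comp, inner_sub_right,
    ← ContinuousLinearMap.adjoint_inner_left, hH.adjoint_eq, hv, hw, map_smul, inner_smul_left,
    inner_smul_right, conj_ofReal]
  push_cast
  ring

theorem inner_invLiouville_of_apply_eq_smul (hH : IsSelfAdjoint H) {W : ℝ → ℂ}
    (hW : Integrable W) (A : ℋ →L[ℂ] ℋ) {v w : ℋ} {a b : ℝ} (hv : H v = (a : ℂ) • v)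
    (hw : H w = (b : ℂ) • w) :
    ⟪v, invLiouville W H A w⟫_ℂ = invLiouvilleSymbol W (a - b) * ⟪v, A w⟫_ℂ := by
  let φ : (ℋ →L[ℂ] ℋ) →L[ℂ] ℂ := (innerSL ℂ v).comp (ContinuousLinearMap.apply ℂ ℋ w)
  have hφ : ∀ s : ℝ, φ (W s • (evolution H s * A * evolution H (-s))) =
      (W s * exp (I * (a - b : ℝ) * s)) * ⟪v, A w⟫_ℂ := by
    intro s
    simp only [φ, ContinuousLinearMap.comp_apply, ContinuousLinearMap.apply_apply,
      innerSL_apply_apply, mul_apply_eq_comp, evolution_apply_of_apply_eq_smul _ hw,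
      map_smul, inner_evolution_right_of_apply_eq_smul hH s hv, smul_eq_mul]
    rw [mul_left_comm (exp _), ← mul_assoc (exp _), ← exp_add]
    push_cast
    ring_nf
  calc ⟪v, invLiouville W H A w⟫_ℂ = φ (invLiouville W H A) := rfl
    _ = ∫ s : ℝ, (W s * exp (I * (a - b : ℝ) * s)) * ⟪v, A w⟫_ℂ := by
      rw [invLiouville_eq_integral_evolution, ← φ.integral_comp_comm
        (integrable_smul_evolution_conj hH hW A)]
      simp only [hφ]
    _ = invLiouvilleSymbol W (a - b) * ⟪v, A w⟫_ℂ := integral_mul_const _ _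

end

theorem invLiouvilleSymbol_eq_sqrt_mul_fhat_neg (W : ℝ → ℂ) (ω : ℝ) :
    invLiouvilleSymbol W ω = (Real.sqrt (2 * Real.pi) : ℂ) * fhat W (-ω) := by
  have hpos : (Real.sqrt (2 * Real.pi) : ℂ) ≠ 0 := by
    exact_mod_cast (Real.sqrt_pos.mpr (by positivity)).ne'
  rw [fhat, mul_inv_cancel_left₀ hpos, invLiouvilleSymbol]
  congr 1 with s
  rw [mul_comm]
  push_cast
  ring_nf

theorem neg_I_mul_mul_invLiouvilleSymbol {W : ℝ → ℂ} {ω : ℝ} (hω : ω ≠ 0)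
    (hW : fhat W (-ω) = -I / ((Real.sqrt (2 * Real.pi) : ℂ) * ((-ω : ℝ) : ℂ))) :
    -I * ω * invLiouvilleSymbol W ω = 1 := by
  have hpos : (Real.sqrt (2 * Real.pi) : ℂ) ≠ 0 := by
    exact_mod_cast (Real.sqrt_pos.mpr (by positivity)).ne'
  rw [invLiouvilleSymbol_eq_sqrt_mul_fhat_neg, hW]
  have hω' : (ω : ℂ) ≠ 0 := ofReal_ne_zero.mpr hω
  push_cast
  field_simp
  rw [I_sq, neg_neg]

theorem IsOffDiagonal.neg_I_mul_mul_invLiouvilleSymbol_mul_inner {H A : ℋ →L[ℂ] ℋ}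
    (hH : IsSelfAdjoint H) {S : Set ℝ} {g : ℝ} (hg : 0 < g)
    (hgap : ∀ μ ∈ S, ∀ ν ∈ realEigenvalues H \ S, g ≤ |μ - ν|) {W : ℝ → ℂ}
    (hW : ∀ ω : ℝ, g ≤ |ω| → fhat W ω = -I / ((Real.sqrt (2 * Real.pi) : ℂ) * (ω : ℂ)))
    (hA : IsOffDiagonal (spectralProj H S) A) {v w : ℋ} {a b : ℝ}
    (hv : HasEigenvector (H : ℋ →ₗ[ℂ] ℋ) a v) (hw : HasEigenvector (H : ℋ →ₗ[ℂ] ℋ) b w) :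
    -I * (a - b : ℝ) * invLiouvilleSymbol W (a - b) * ⟪v, A w⟫_ℂ = ⟪v, A w⟫_ℂ := by
  let K := ⨆ μ ∈ S, eigenspace (H : ℋ →ₗ[ℂ] ℋ) (μ : ℂ)
  have mem_K {u : ℋ} {c : ℝ} (hu : HasEigenvector (H : ℋ →ₗ[ℂ] ℋ) c u) (hc : c ∈ S) :
      u ∈ K :=
    le_iSup₂ (f := fun μ (_ : μ ∈ S) => eigenspace (H : ℋ →ₗ[ℂ] ℋ) (μ : ℂ)) c hc hu.1
  have mem_K_orthogonal {u : ℋ} {c : ℝ} (hu : HasEigenvector (H : ℋ →ₗ[ℂ] ℋ) c u)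
      (hc : c ∉ S) : u ∈ Kᗮ :=
    (hH.isSymmetric.eigenspace_isOrtho_iSup_eigenspace hc).le hu.1
  by_cases hab : a ∈ S ↔ b ∈ S
  · have hAvw : ⟪v, A w⟫_ℂ = 0 := by
      by_cases ha : a ∈ S
      · exact hA.inner_eq_zero_of_mem (mem_K hv ha) (mem_K hw (hab.mp ha))
      · exact hA.inner_eq_zero_of_mem_orthogonal (mem_K_orthogonal hv ha)
          (mem_K_orthogonal hw (mt hab.mpr ha))
    rw [hAvw, mul_zero]
  · have hgab : g ≤ |a - b| := by
      by_cases ha : a ∈ S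
      · exact hgap a ha b ⟨hasEigenvalue_of_hasEigenvector hw, fun hb => hab (iff_of_true ha hb)⟩
      · rw [abs_sub_comm]
        exact hgap b (by tauto) a ⟨hasEigenvalue_of_hasEigenvector hv, ha⟩
    have hab0 : a - b ≠ 0 := fun h => by simp [h] at hgab; linarith
    rw [neg_I_mul_mul_invLiouvilleSymbol hab0 (hW _ (by rwa [abs_neg])), one_mul]

theorem statement15_general (H : ℋ →L[ℂ] ℋ) (hH : IsSelfAdjoint H)
    (σstar : Set ℝ)
    (g : ℝ) (hg : 0 < g)
    (hgap : ∀ μ ∈ σstar, ∀ ν ∈ realEigenvalues H \ σstar, g ≤ |μ - ν|)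
    (W : ℝ → ℂ) (hWint : MeasureTheory.Integrable W)
    (hW : ∀ ω : ℝ, g ≤ |ω| →
      fhat W ω = -Complex.I / ((Real.sqrt (2 * Real.pi) : ℂ) * (ω : ℂ)))
    (A : ℋ →L[ℂ] ℋ) (hA : IsOffDiagonal (spectralProj H σstar) A) :
    (-Complex.I) • (H * invLiouville W H A - invLiouville W H A * H) = A ∧
    invLiouville W H ((-Complex.I) • (H * A - A * H)) = A := by
  have hT := hH.isSymmetric
  let B := hT.eigenvectorBasis rfl
  have hB := hT.hasEigenvector_eigenvectorBasis rfl
  have hBH i : H (B i) = _ • B i := (hB i).apply_eq_smul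
  have key i j := hA.neg_I_mul_mul_invLiouvilleSymbol_mul_inner hH hg hgap hW (hB i) (hB j)
  constructor
  · refine ContinuousLinearMap.ext_inner_orthonormalBasis B fun i j => ?_
    rw [smul_apply, inner_smul_right, inner_commutator_of_apply_eq_smul hH _ (hBH i) (hBH j),
      inner_invLiouville_of_apply_eq_smul hH hWint A (hBH i) (hBH j)]
    linear_combination key i j
  · refine ContinuousLinearMap.ext_inner_orthonormalBasis B fun i j => ?_
    rw [inner_invLiouville_of_apply_eq_smul hH hWint _ (hBH i) (hBH j), smul_apply,
      inner_smul_right, inner_commutator_of_apply_eq_smul hH A (hBH i) (hBH j)]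
    linear_combination key i j

/-- Lemma D.1, first part. If `σ_*(H) = I ∩ σ(H)` for an interval `I`, the
gap `g > 0`, and `Ŵ(ω) = −i/(√(2π)·ω)` for `|ω| ≥ g`, then `ℐ_H` inverts the Liouvillian
`A ↦ −i[H,A]` on operators that are off-diagonal with respect to the spectral projection
`P_*`. -/
theorem statement15 (H : ℋ →L[ℂ] ℋ) (hH : IsSelfAdjoint H)
    (σstar : Set ℝ)
    (hI : ∃ I : Set ℝ, I.OrdConnected ∧ σstar = I ∩ realEigenvalues H)
    (g : ℝ) (hg : 0 < g)
    (hgap : ∀ μ ∈ σstar, ∀ ν ∈ realEigenvalues H \ σstar, g ≤ |μ - ν|)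
    (W : ℝ → ℂ) (hWint : MeasureTheory.Integrable W)
    (hW : ∀ ω : ℝ, g ≤ |ω| →
      fhat W ω = -Complex.I / ((Real.sqrt (2 * Real.pi) : ℂ) * (ω : ℂ)))
    (A : ℋ →L[ℂ] ℋ) (hA : IsOffDiagonal (spectralProj H σstar) A) :
    (-Complex.I) • (H * invLiouville W H A - invLiouville W H A * H) = A ∧
    invLiouville W H ((-Complex.I) • (H * A - A * H)) = A :=
  statement15_general H hH σstar g hg hgap W hWint hW A hA
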